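/- In quantum theory on a finite-dimensional Hilbert space, an effect a (operator with 0 ≤ a ≤ 1) is sharp — meaning the only positive operator c with c ≤ a and c ≤ 1 − a is c = 0 — if and only if a is a projection (a² = a). -/

import Mathlib

open scoped ComplexOrder

/-!
For an effect `a`, the element `a * (1 - a)` is positive and lies below both `a` and `1 - a`,
the differences being `a * a` and `(1 - a) * (1 - a)`; so sharpness forces `a * a = a`.

Conversely, let `a` be a projection and `0 ≤ c` with `c ≤ a` and `c ≤ 1 - a`. Compressing by
`1 - a` gives `0 ≤ (1 - a) * c * (1 - a) ≤ (1 - a) * a * (1 - a) = 0`; writing `c = s⋆ * s`,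
the C⋆-identity turns this into `s * (1 - a) = 0`, hence `c * (1 - a) = 0`. Symmetrically
`c * a = 0`, and `c = c * a + c * (1 - a) = 0`.
-/

lemma mul_eq_zero_of_le_of_conj_eq_zero {A : Type*} [NonUnitalCStarAlgebra A] [PartialOrder A]
    [StarOrderedRing A] {b c q : A} (hq : IsSelfAdjoint q) (hc : 0 ≤ c) (hcb : c ≤ b)
    (hb : q * b * q = 0) : c * q = 0 := by
  have hqcq : q * c * q = 0 :=
    le_antisymm (hb ▸ hq.conjugate_le_conjugate hcb) (hq.conjugate_nonneg hc)
  obtain ⟨s, rfl⟩ := CStarAlgebra.nonneg_iff_eq_star_mul_self.mp hc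
  have hsq : s * q = 0 := by
    rw [← CStarRing.star_mul_self_eq_zero_iff, star_mul, hq.star_eq, ← hqcq]
    noncomm_ring
  rw [mul_assoc, hsq, mul_zero]

section CStarAlgebra

variable {A : Type*} [CStarAlgebra A] [PartialOrder A] [StarOrderedRing A]

def IsSharp (a : A) : Prop := ∀ c, 0 ≤ c → c ≤ a → c ≤ 1 - a → c = 0

lemma IsIdempotentElem.eq_zero_of_le_of_le_one_sub {p c : A} (hp : IsSelfAdjoint p)
    (hpp : IsIdempotentElem p) (hc : 0 ≤ c) (hcp : c ≤ p) (hcp' : c ≤ 1 - p) : c = 0 := by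
  have hp' : (1 - p) * p * (1 - p) = 0 := by
    rw [sub_mul, one_mul, hpp.eq, sub_self, zero_mul]
  have hp'' : p * (1 - p) * p = 0 := by
    rw [mul_sub, mul_one, hpp.eq, sub_self, zero_mul]
  calc c = c * (1 - p) + c * p := by noncomm_ring
    _ = 0 := by
      rw [mul_eq_zero_of_le_of_conj_eq_zero ((IsSelfAdjoint.one A).sub hp) hc hcp hp',
        mul_eq_zero_of_le_of_conj_eq_zero hp hc hcp' hp'', add_zero]

lemma IsSharp.isIdempotentElem {a : A} (ha : 0 ≤ a) (ha1 : a ≤ 1) (h : IsSharp a) :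
    IsIdempotentElem a := by
  have hcomm : Commute a (1 - a) := (Commute.one_right a).sub_right (Commute.refl a)
  have hle : a * (1 - a) ≤ a := by
    rw [← sub_nonneg, show a - a * (1 - a) = a * a by noncomm_ring]
    exact (IsSelfAdjoint.of_nonneg ha).mul_self_nonneg
  have hle' : a * (1 - a) ≤ 1 - a := by
    rw [← sub_nonneg, show 1 - a - a * (1 - a) = (1 - a) * (1 - a) by noncomm_ring]
    exact (IsSelfAdjoint.of_nonneg (sub_nonneg.mpr ha1)).mul_self_nonneg
  have hzero := h _ (hcomm.mul_nonneg ha (sub_nonneg.mpr ha1)) hle hle'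
  rw [mul_sub, mul_one, sub_eq_zero] at hzero
  exact hzero.symm

lemma isSharp_iff_isIdempotentElem {a : A} (ha : 0 ≤ a) (ha1 : a ≤ 1) :
    IsSharp a ↔ IsIdempotentElem a :=
  ⟨IsSharp.isIdempotentElem ha ha1, fun hp _ => hp.eq_zero_of_le_of_le_one_sub (.of_nonneg ha)⟩

end CStarAlgebra

theorem sharp_effect_iff_projection {n : ℕ} (a : Matrix (Fin n) (Fin n) ℂ)
    (ha : a.PosSemidef) (ha1 : (1 - a).PosSemidef) :
    (∀ c : Matrix (Fin n) (Fin n) ℂ, c.PosSemidef → (a - c).PosSemidef →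
        ((1 - a) - c).PosSemidef → c = 0) ↔ a * a = a := by
  -- the ℓ²-operator norm makes matrices a C⋆-algebra, whose `MatrixOrder` is the Loewner order
  let _ : CStarAlgebra (Matrix (Fin n) (Fin n) ℂ) := Matrix.instCStarAlgebra
  open scoped MatrixOrder in
  have hsharp := isSharp_iff_isIdempotentElem (a := a) ha.nonneg (Matrix.le_iff.mpr ha1)
  simpa only [IsSharp, Matrix.le_iff, sub_zero, IsIdempotentElem] using hsharp
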